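/- arXiv:1804.02693 — 6 statements merged into one kernel-verified Lean document; each statement's English description precedes it below -/
import Mathlib

section
/- For every T > 0, the Gibbs distribution π_T(a) := exp(φ(a)/T)/Σ_{b∈𝒜} exp(φ(b)/T) satisfies detailed balance with respect to the log-linear learning transition matrix: π_T(a)·P_T^LLL(a, a′) = π_T(a′)·P_T^LLL(a′, a) for all a ≠ a′ in 𝒜. Consequently π_T is a stationary distribution of P_T^LLL: Σ_{a∈𝒜} π_T(a)·P_T^LLL(a, a′) = π_T(a′) for every a′ ∈ 𝒜. -/
/-!
A log-linear move `a → b` by player `i` has probability proportional to `exp (U i b / T)`, with a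
normalizer that depends only on `a₋ᵢ = b₋ᵢ`. The potential identity
`φ a - φ b = U i a - U i b` then makes `exp (φ a / T) * exp (U i b / T)` symmetric in `a` and `b`,
which is detailed balance; summing detailed balance over a stochastic matrix gives stationarity.
-/

open Finset Real Filter Topology

variable {n : ℕ} {A : Fin n → Type*}

section Defs
variable [∀ i, Fintype (A i)] [∀ i, DecidableEq (A i)] [∀ i, Nonempty (A i)]

/-- `a` and `b` differ in exactly coordinate `i`. -/
def Neighbor (a b : ∀ i, A i) (i : Fin n) : Prop :=
  a i ≠ b i ∧ ∀ j, j ≠ i → a j = b j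

instance (a b : ∀ i, A i) (i : Fin n) : Decidable (Neighbor a b i) :=
  inferInstanceAs (Decidable (_ ∧ _))

/-- `φ` is a potential function for the game with utilities `U`. -/
def IsPotential (U : Fin n → (∀ i, A i) → ℝ) (φ : (∀ i, A i) → ℝ) : Prop :=
  ∀ (i : Fin n) (a : ∀ j, A j) (α α' : A i),
    U i (Function.update a i α) - U i (Function.update a i α')
      = φ (Function.update a i α) - φ (Function.update a i α')

/-- Best attainable utility of player `i` against `a₋ᵢ`. -/
noncomputable def bestVal (U : Fin n → (∀ i, A i) → ℝ) (i : Fin n) (a : ∀ j, A j) : ℝ :=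
  Finset.univ.sup' Finset.univ_nonempty fun β : A i => U i (Function.update a i β)

open Classical in
/-- Best response set of player `i` against `a₋ᵢ`. -/
noncomputable def BR (U : Fin n → (∀ i, A i) → ℝ) (i : Fin n) (a : ∀ j, A j) : Finset (A i) :=
  Finset.univ.filter fun β => U i (Function.update a i β) = bestVal U i a

/-- Metropolis learning transition cost. -/
noncomputable def VML (U : Fin n → (∀ i, A i) → ℝ) (a b : ∀ i, A i) : ℝ :=
  ∑ i, if a i ≠ b i then max (U i a - U i b) 0 else 0

/-- Log-linear learning transition cost. -/
noncomputable def VLLL (U : Fin n → (∀ i, A i) → ℝ) (a b : ∀ i, A i) : ℝ :=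
  ∑ i, if a i ≠ b i then bestVal U i a - U i b else 0

noncomputable def PMLoff (U : Fin n → (∀ i, A i) → ℝ) (T : ℝ) (a b : ∀ i, A i) : ℝ :=
  ∑ i, if Neighbor a b i then
    (1 / ((n : ℝ) * (Fintype.card (A i) : ℝ))) * Real.exp (-(max (U i a - U i b) 0) / T)
  else 0

/-- Metropolis learning transition matrix. -/
noncomputable def PML (U : Fin n → (∀ i, A i) → ℝ) (T : ℝ) (a b : ∀ i, A i) : ℝ :=
  if a = b then 1 - ∑ c, PMLoff U T a c else PMLoff U T a b

noncomputable def PLLLoff (U : Fin n → (∀ i, A i) → ℝ) (T : ℝ) (a b : ∀ i, A i) : ℝ :=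
  ∑ i, if Neighbor a b i then
    (1 / (n : ℝ)) * Real.exp (U i b / T) / ∑ β : A i, Real.exp (U i (Function.update a i β) / T)
  else 0

/-- Log-linear learning transition matrix. -/
noncomputable def PLLL (U : Fin n → (∀ i, A i) → ℝ) (T : ℝ) (a b : ∀ i, A i) : ℝ :=
  if a = b then 1 - ∑ c, PLLLoff U T a c else PLLLoff U T a b

/-- The normalizing constant `Z_i(a₋ᵢ)`. -/
noncomputable def Zi (U : Fin n → (∀ i, A i) → ℝ) (T : ℝ) (i : Fin n) (a : ∀ j, A j) : ℝ :=
  ∑ β : A i, Real.exp (-(bestVal U i a - U i (Function.update a i β)) / T)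

/-- The Gibbs distribution. -/
noncomputable def gibbs (φ : (∀ i, A i) → ℝ) (T : ℝ) (a : ∀ i, A i) : ℝ :=
  Real.exp (φ a / T) / ∑ b, Real.exp (φ b / T)

/-- Nash equilibrium. -/
def IsNash (U : Fin n → (∀ i, A i) → ℝ) (a : ∀ i, A i) : Prop :=
  ∀ (i : Fin n) (α : A i), U i (Function.update a i α) ≤ U i a

/-- No player is ever indifferent between two of its own actions. -/
def TieFree (U : Fin n → (∀ i, A i) → ℝ) : Prop :=
  ∀ (i : Fin n) (a : ∀ j, A j) (α α' : A i), α ≠ α' →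
    U i (Function.update a i α) ≠ U i (Function.update a i α')

/-- `ω 0, ω 1, …, ω p` is a path: pairwise-distinct entries, consecutive entries neighbors. -/
def IsPath (ω : ℕ → ∀ i, A i) (p : ℕ) : Prop :=
  (∀ k ≤ p, ∀ l ≤ p, ω k = ω l → k = l) ∧ ∀ k < p, ∃ i, Neighbor (ω k) (ω (k + 1)) i

/-- Zero-cost paths from `a` to the set `B` w.r.t. the cost `V`, encoded as (length, path). -/
def ZPaths (V : (∀ i, A i) → (∀ i, A i) → ℝ) (a : ∀ i, A i) (B : Set (∀ i, A i)) :
    Set (ℕ × (ℕ → ∀ i, A i)) :=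
  {q | IsPath q.2 q.1 ∧ q.2 0 = a ∧ q.2 q.1 ∈ B ∧ ∀ k < q.1, V (q.2 k) (q.2 (k + 1)) = 0}

/-- Minimal length of a zero-cost path from `a` to `B`. -/
noncomputable def minLen (V : (∀ i, A i) → (∀ i, A i) → ℝ) (a : ∀ i, A i)
    (B : Set (∀ i, A i)) : ℕ :=
  sInf {p | ∃ ω, (p, ω) ∈ ZPaths V a B}

/-- Maximal length of a zero-cost path from `a` to `B`. -/
noncomputable def maxLen (V : (∀ i, A i) → (∀ i, A i) → ℝ) (a : ∀ i, A i)
    (B : Set (∀ i, A i)) : ℕ :=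
  sSup {p | ∃ ω, (p, ω) ∈ ZPaths V a B}

/-- Communication altitude w.r.t. the cost `V` and potential `φ`. -/
noncomputable def Ac (V : (∀ i, A i) → (∀ i, A i) → ℝ) (φ : (∀ i, A i) → ℝ)
    (x y : ∀ i, A i) : ℝ :=
  sSup {v | ∃ (p : ℕ) (ω : ℕ → ∀ i, A i), 0 < p ∧ IsPath ω p ∧ ω 0 = x ∧ ω p = y ∧
    v = ⨅ k : Fin p, (φ (ω k) - V (ω k) (ω (k + 1)))}

/-- `max_i |A_i|`. -/
noncomputable def mMax (A : Fin n → Type*) [∀ i, Fintype (A i)] : ℕ :=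
  ⨆ i : Fin n, Fintype.card (A i)

/-- `min_i |A_i|`. -/
noncomputable def mMin (A : Fin n → Type*) [∀ i, Fintype (A i)] : ℕ :=
  ⨅ i : Fin n, Fintype.card (A i)

/-- `Z_max(T)`. -/
noncomputable def Zmax (U : Fin n → (∀ i, A i) → ℝ) (T : ℝ) : ℝ :=
  ⨆ i : Fin n, ⨆ a : ∀ j, A j, Zi U T i a

noncomputable def GammaML (A : Fin n → Type*) [∀ i, Fintype (A i)] : ℝ :=
  1 / ((n : ℝ) * (mMax A : ℝ))

noncomputable def GammaLLL (U : Fin n → (∀ i, A i) → ℝ) (T : ℝ) : ℝ :=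
  1 / ((n : ℝ) * Zmax U T)

end Defs

theorem sum_mul_eq_of_detailed_balance {α R : Type*} [Fintype α] [CommSemiring R]
    (p : α → R) (P : α → α → R) (hrow : ∀ a, ∑ b, P a b = 1)
    (hdb : ∀ a b, a ≠ b → p a * P a b = p b * P b a) (b : α) :
    ∑ a, p a * P a b = p b :=
  calc ∑ a, p a * P a b
      = ∑ a, p b * P b a := by
        refine Finset.sum_congr rfl fun a _ => ?_
        rcases eq_or_ne a b with rfl | hab
        · rfl
        · exact hdb a b hab
    _ = p b := by rw [← Finset.mul_sum, hrow, mul_one]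

namespace Neighbor

variable {a b : ∀ i, A i} {i : Fin n}

theorem symm (h : Neighbor a b i) : Neighbor b a i :=
  ⟨h.1.symm, fun j hj => (h.2 j hj).symm⟩

theorem update_eq_update (h : Neighbor a b i) (β : A i) :
    Function.update a i β = Function.update b i β :=
  Function.update_eq_iff.2 ⟨by simp, fun j hj => by simp [hj, h.2 j hj]⟩

theorem update_self (h : Neighbor a b i) : Function.update a i (b i) = b :=
  Function.update_eq_iff.2 ⟨rfl, h.2⟩

end Neighbor

theorem IsPotential.add_eq_add_of_neighbor {U : Fin n → (∀ i, A i) → ℝ} {φ : (∀ i, A i) → ℝ}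
    (hpot : IsPotential U φ) {a b : ∀ i, A i} {i : Fin n} (h : Neighbor a b i) :
    φ a + U i b = φ b + U i a := by
  have := hpot i a (a i) (b i)
  rw [Function.update_eq_self, h.update_self] at this
  linarith

section LogLinear

variable [∀ i, Fintype (A i)] [∀ i, DecidableEq (A i)]

theorem PLLLoff_self (U : Fin n → (∀ i, A i) → ℝ) (T : ℝ) (a : ∀ i, A i) :
    PLLLoff U T a a = 0 :=
  Finset.sum_eq_zero fun _ _ => if_neg fun h => h.1 rfl

theorem sum_PLLL (U : Fin n → (∀ i, A i) → ℝ) (T : ℝ) (a : ∀ i, A i) :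
    ∑ b, PLLL U T a b = 1 := by
  have hoff : ∀ b ∈ Finset.univ.erase a, PLLL U T a b = PLLLoff U T a b :=
    fun b hb => if_neg (Finset.ne_of_mem_erase hb).symm
  rw [← Finset.add_sum_erase _ _ (Finset.mem_univ a), Finset.sum_congr rfl hoff,
    Finset.sum_erase _ (PLLLoff_self U T a), PLLL, if_pos rfl, sub_add_cancel]

theorem gibbs_mul_PLLLoff {U : Fin n → (∀ i, A i) → ℝ} {φ : (∀ i, A i) → ℝ}
    (hpot : IsPotential U φ) (T : ℝ) (a b : ∀ i, A i) :
    gibbs φ T a * PLLLoff U T a b = gibbs φ T b * PLLLoff U T b a := by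
  simp only [PLLLoff, Finset.mul_sum]
  refine Finset.sum_congr rfl fun i _ => ?_
  by_cases h : Neighbor a b i
  · rw [if_pos h, if_pos h.symm]
    have hZ : ∑ β : A i, Real.exp (U i (Function.update a i β) / T)
        = ∑ β : A i, Real.exp (U i (Function.update b i β) / T) := by
      simp only [h.update_eq_update]
    have hexp : Real.exp (φ a / T) * Real.exp (U i b / T)
        = Real.exp (φ b / T) * Real.exp (U i a / T) := by
      rw [← Real.exp_add, ← Real.exp_add, ← add_div, ← add_div,
        hpot.add_eq_add_of_neighbor h]
    simp only [gibbs, hZ]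
    linear_combination
      hexp / ((n : ℝ) * (∑ c, Real.exp (φ c / T)) *
        ∑ β : A i, Real.exp (U i (Function.update b i β) / T))
  · rw [if_neg h, if_neg fun h' => h h'.symm, mul_zero, mul_zero]

theorem gibbs_mul_PLLL {U : Fin n → (∀ i, A i) → ℝ} {φ : (∀ i, A i) → ℝ}
    (hpot : IsPotential U φ) (T : ℝ) {a b : ∀ i, A i} (hab : a ≠ b) :
    gibbs φ T a * PLLL U T a b = gibbs φ T b * PLLL U T b a := by
  rw [PLLL, PLLL, if_neg hab, if_neg hab.symm, gibbs_mul_PLLLoff hpot]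

variable [∀ i, Nonempty (A i)]

theorem statement3_general
    (U : Fin n → (∀ i, A i) → ℝ) (φ : (∀ i, A i) → ℝ) (hpot : IsPotential U φ) :
    ∀ T > (0 : ℝ),
      (∀ a b : ∀ i, A i, a ≠ b →
        gibbs φ T a * PLLL U T a b = gibbs φ T b * PLLL U T b a)
      ∧ ∀ b : ∀ i, A i, ∑ a, gibbs φ T a * PLLL U T a b = gibbs φ T b := by
  intro T _
  have hdb : ∀ a b : ∀ i, A i, a ≠ b →
      gibbs φ T a * PLLL U T a b = gibbs φ T b * PLLL U T b a :=
    fun _ _ hab => gibbs_mul_PLLL hpot T hab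
  exact ⟨hdb, sum_mul_eq_of_detailed_balance _ _ (sum_PLLL U T) hdb⟩

/-- The Gibbs distribution satisfies detailed balance w.r.t. the log-linear
learning transition matrix, and is consequently a stationary distribution of it. -/
theorem statement3 (hn : 0 < n)
    (U : Fin n → (∀ i, A i) → ℝ) (φ : (∀ i, A i) → ℝ) (hpot : IsPotential U φ) :
    ∀ T > (0 : ℝ),
      (∀ a b : ∀ i, A i, a ≠ b →
        gibbs φ T a * PLLL U T a b = gibbs φ T b * PLLL U T b a)
      ∧ ∀ b : ∀ i, A i, ∑ a, gibbs φ T a * PLLL U T a b = gibbs φ T b :=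
  statement3_general U φ hpot

end LogLinear
end

section
/- For T > 0 define Z_max(T) := max over players i and profiles a_{−i} of Z_i(a_{−i}), and Γ_T^LLL := 1/(n·Z_max(T)). Then for every T > 0 and every pair of neighbors a, a′ in 𝒜, Γ_T^LLL·exp(−V^LLL(a, a′)/T) ≤ P_T^LLL(a, a′) ≤ (1/Γ_T^LLL)·exp(−V^LLL(a, a′)/T), and moreover lim_{T→0⁺} T·ln(Γ_T^LLL) = 0. -/
open Finset Real Filter Topology

variable {n : ℕ} {A : Fin n → Type*}

section Defs
variable [∀ i, Fintype (A i)] [∀ i, DecidableEq (A i)] [∀ i, Nonempty (A i)]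

lemma bestVal_ge (U : Fin n → (∀ i, A i) → ℝ) (i : Fin n) (a : ∀ j, A j) (β : A i) :
    U i (Function.update a i β) ≤ bestVal U i a := by
  unfold bestVal
  exact Finset.le_sup' (fun β : A i => U i (Function.update a i β)) (Finset.mem_univ β)

lemma one_le_Zi {T : ℝ} (hT : 0 < T) (U : Fin n → (∀ i, A i) → ℝ) (i : Fin n) (a : ∀ j, A j) :
    1 ≤ Zi U T i a := by
  obtain ⟨β, -, hβ⟩ := Finset.exists_mem_eq_sup' (Finset.univ_nonempty)
    (fun β : A i => U i (Function.update a i β))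
  have h1 : Real.exp (-(bestVal U i a - U i (Function.update a i β)) / T) = 1 := by
    have : bestVal U i a = U i (Function.update a i β) := hβ
    rw [this]; simp
  calc (1:ℝ) = Real.exp (-(bestVal U i a - U i (Function.update a i β)) / T) := h1.symm
    _ ≤ Zi U T i a := by
      rw [Zi]
      exact Finset.single_le_sum
        (f := fun β : A i => Real.exp (-(bestVal U i a - U i (Function.update a i β)) / T))
        (fun b _ => (Real.exp_pos _).le) (Finset.mem_univ β)

lemma Zi_le_card {T : ℝ} (hT : 0 < T) (U : Fin n → (∀ i, A i) → ℝ) (i : Fin n) (a : ∀ j, A j) :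
    Zi U T i a ≤ (Fintype.card (A i) : ℝ) := by
  rw [Zi]
  calc ∑ β : A i, Real.exp (-(bestVal U i a - U i (Function.update a i β)) / T)
      ≤ ∑ _β : A i, (1:ℝ) := by
        refine Finset.sum_le_sum fun β _ => ?_
        rw [Real.exp_le_one_iff]
        have h1 := bestVal_ge U i a β
        have h2 : -(bestVal U i a - U i (Function.update a i β)) ≤ 0 := by linarith
        exact div_nonpos_of_nonpos_of_nonneg h2 hT.le
    _ = (Fintype.card (A i) : ℝ) := by simp

lemma Zi_le_Zmax (U : Fin n → (∀ i, A i) → ℝ) (T : ℝ) (i : Fin n) (a : ∀ j, A j) :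
    Zi U T i a ≤ Zmax U T := by
  have h1 : Zi U T i a ≤ ⨆ a' : ∀ j, A j, Zi U T i a' :=
    le_ciSup (Set.Finite.bddAbove (Set.finite_range _)) a
  exact h1.trans (le_ciSup (f := fun i => ⨆ a' : ∀ j, A j, Zi U T i a')
    (Set.Finite.bddAbove (Set.finite_range _)) i)

lemma card_le_mMax (hn : 0 < n) (i : Fin n) : Fintype.card (A i) ≤ mMax A :=
  le_ciSup (f := fun i => Fintype.card (A i)) (Set.Finite.bddAbove (Set.finite_range _)) i

lemma Zmax_le_mMax (hn : 0 < n) {T : ℝ} (hT : 0 < T) (U : Fin n → (∀ i, A i) → ℝ) :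
    Zmax U T ≤ (mMax A : ℝ) := by
  have : Nonempty (Fin n) := ⟨⟨0, hn⟩⟩
  refine ciSup_le fun i => ciSup_le fun a => ?_
  exact (Zi_le_card hT U i a).trans (Nat.cast_le.mpr (card_le_mMax hn i))

lemma one_le_Zmax (hn : 0 < n) {T : ℝ} (hT : 0 < T) (U : Fin n → (∀ i, A i) → ℝ) :
    1 ≤ Zmax U T := by
  have i0 : Fin n := ⟨0, hn⟩
  have a0 : ∀ j, A j := fun j => Classical.arbitrary _
  exact (one_le_Zi hT U i0 a0).trans (Zi_le_Zmax U T i0 a0)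

lemma PLLL_eq {T : ℝ} (hT : 0 < T) (U : Fin n → (∀ i, A i) → ℝ)
    {a b : ∀ j, A j} {i : Fin n} (hab : Neighbor a b i) :
    PLLL U T a b = (1/(n:ℝ)) * Real.exp (-(bestVal U i a - U i b)/T) / Zi U T i a := by
  have hne : a ≠ b := fun h => hab.1 (congrFun h i)
  rw [PLLL, if_neg hne, PLLLoff, Finset.sum_eq_single i]
  · rw [if_pos hab]
    have hZ : Zi U T i a = Real.exp (-(bestVal U i a)/T)
        * ∑ β : A i, Real.exp (U i (Function.update a i β) / T) := by
      rw [Zi, Finset.mul_sum]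
      refine Finset.sum_congr rfl fun β _ => ?_
      rw [← Real.exp_add]; ring_nf
    have hE : Real.exp (-(bestVal U i a - U i b)/T)
        = Real.exp (-(bestVal U i a)/T) * Real.exp (U i b / T) := by
      rw [← Real.exp_add]; ring_nf
    rw [hZ, hE, mul_div_assoc, mul_div_assoc,
      mul_div_mul_left _ _ (Real.exp_ne_zero _)]
  · intro j _ hji
    rw [if_neg]
    intro hNb
    exact hab.1 (hNb.2 i (fun h => hji h.symm))
  · intro h; exact absurd (Finset.mem_univ i) h

/-- With `Γ_T^LLL = 1/(n·Z_max(T))`, for every `T > 0` and every pair of neighbors,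
`Γ_T^LLL·exp(−V^LLL/T) ≤ P_T^LLL ≤ (1/Γ_T^LLL)·exp(−V^LLL/T)`, and
`lim_{T→0⁺} T·ln(Γ_T^LLL) = 0`. -/
theorem statement7 (hn : 0 < n)
    (U : Fin n → (∀ i, A i) → ℝ) (φ : (∀ i, A i) → ℝ) (hpot : IsPotential U φ) :
    (∀ T > (0 : ℝ), ∀ (i : Fin n) (a b : ∀ j, A j), Neighbor a b i →
      GammaLLL U T * Real.exp (-(bestVal U i a - U i b) / T) ≤ PLLL U T a b
      ∧ PLLL U T a b ≤ (1 / GammaLLL U T) * Real.exp (-(bestVal U i a - U i b) / T))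
    ∧ Tendsto (fun T : ℝ => T * Real.log (GammaLLL U T)) (𝓝[>] 0) (𝓝 0) := by
  have hn1 : (1:ℝ) ≤ n := by exact_mod_cast hn
  constructor
  · intro T hT i a b hab
    set E := Real.exp (-(bestVal U i a - U i b) / T) with hE
    have hEpos : 0 < E := Real.exp_pos _
    have hnpos : (0:ℝ) < n := by linarith
    have hZi1 : 1 ≤ Zi U T i a := one_le_Zi hT U i a
    have hZipos : 0 < Zi U T i a := lt_of_lt_of_le one_pos hZi1
    have hZiM : Zi U T i a ≤ Zmax U T := Zi_le_Zmax U T i a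
    have hZm1 : 1 ≤ Zmax U T := one_le_Zmax hn hT U
    have hZmpos : 0 < Zmax U T := lt_of_lt_of_le one_pos hZm1
    rw [PLLL_eq hT U hab]
    constructor
    · have h1 : GammaLLL U T * E = E / ((n:ℝ) * Zmax U T) := by
        rw [GammaLLL]; ring
      have h2 : (1/(n:ℝ)) * E / Zi U T i a = E / ((n:ℝ) * Zi U T i a) := by
        field_simp
      rw [h1, h2]
      gcongr
    · have h3 : 1 / GammaLLL U T = (n:ℝ) * Zmax U T := by
        rw [GammaLLL, one_div_one_div]
      rw [h3]
      calc (1/(n:ℝ)) * E / Zi U T i a ≤ (1/(n:ℝ)) * E / 1 := by gcongr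
        _ = (1/(n:ℝ)) * E := by rw [div_one]
        _ ≤ 1 * E := by
            gcongr
            rw [div_le_one hnpos]; exact hn1
        _ ≤ ((n:ℝ) * Zmax U T) * E := by
            gcongr
            nlinarith
  · have hM1 : (1:ℝ) ≤ (mMax A : ℝ) := by
      have h : 1 ≤ mMax A :=
        le_trans Fintype.card_pos (card_le_mMax hn ⟨0, hn⟩)
      exact_mod_cast h
    set C : ℝ := Real.log ((n:ℝ) * (mMax A : ℝ)) with hC
    have hbound : ∀ T : ℝ, 0 < T →
        -C * T ≤ T * Real.log (GammaLLL U T) ∧ T * Real.log (GammaLLL U T) ≤ 0 := by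
      intro T hT
      have hZm1 : 1 ≤ Zmax U T := one_le_Zmax hn hT U
      have hZmM : Zmax U T ≤ (mMax A : ℝ) := Zmax_le_mMax hn hT U
      have hlogG : Real.log (GammaLLL U T) = -Real.log ((n:ℝ) * Zmax U T) := by
        rw [GammaLLL, one_div, Real.log_inv]
      have h1 : Real.log ((n:ℝ) * Zmax U T) ≤ C := by
        rw [hC]
        apply Real.log_le_log (by nlinarith)
        nlinarith
      have h0 : 0 ≤ Real.log ((n:ℝ) * Zmax U T) := Real.log_nonneg (by nlinarith)
      constructor
      · rw [hlogG]; nlinarith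
      · rw [hlogG]; nlinarith
    have hlow : Tendsto (fun T : ℝ => -C * T) (𝓝[>] (0:ℝ)) (𝓝 0) := by
      have h : Tendsto (fun T : ℝ => -C * T) (𝓝 (0:ℝ)) (𝓝 (-C * 0)) :=
        (continuous_const.mul continuous_id).tendsto (0:ℝ)
      rw [mul_zero] at h
      exact h.mono_left nhdsWithin_le_nhds
    refine tendsto_of_tendsto_of_tendsto_of_le_of_le' hlow tendsto_const_nhds ?_ ?_
    · filter_upwards [self_mem_nhdsWithin] with T hT using (hbound T hT).1
    · filter_upwards [self_mem_nhdsWithin] with T hT using (hbound T hT).2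

end Defs
end

section
/- Suppose the finite potential game is tie-free. Let M be the set of Nash equilibria. Then for every profile a ∈ 𝒜 with a ∉ M, the set Ω^LLL(a, M) of zero-cost LLL paths from a to M and the set Ω^ML(a, M) of zero-cost ML paths from a to M are both nonempty; i.e., there exists a finite sequence of pairwise-distinct profiles a = ω_0, ω_1, …, ω_p with consecutive entries neighbors, ω_p ∈ M, and all transition costs along the path equal to zero. -/
open Finset Real Filter Topology

variable {n : ℕ} {A : Fin n → Type*}

section Defs
variable [∀ i, Fintype (A i)] [∀ i, DecidableEq (A i)] [∀ i, Nonempty (A i)]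

private lemma chain_lt {f : ℕ → ℝ} {p : ℕ} (h : ∀ k < p, f k < f (k + 1)) :
    ∀ k l, k < l → l ≤ p → f k < f l := by
  intro k l hkl hlp
  induction l with
  | zero => omega
  | succ m ih =>
    rcases Nat.lt_succ_iff_lt_or_eq.mp hkl with h1 | h1
    · exact lt_trans (ih h1 (by omega)) (h m (by omega))
    · subst h1; exact h k (by omega)

private lemma step_lemma
    (U : Fin n → (∀ i, A i) → ℝ) (φ : (∀ i, A i) → ℝ) (hpot : IsPotential U φ)
    (a : ∀ j, A j) (ha : ¬ IsNash U a) :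
    ∃ b, (∃ i, Neighbor a b i) ∧ φ a < φ b ∧ VLLL U a b = 0 ∧ VML U a b = 0 := by
  simp only [IsNash, not_forall, not_le] at ha
  obtain ⟨i, α, hα⟩ := ha
  obtain ⟨β, -, hβ⟩ := Finset.exists_mem_eq_sup' (Finset.univ_nonempty (α := A i))
    (fun β : A i => U i (Function.update a i β))
  have hbest : U i (Function.update a i β) = bestVal U i a := hβ.symm
  have hle : U i (Function.update a i α) ≤ bestVal U i a :=
    Finset.le_sup' (fun β : A i => U i (Function.update a i β)) (Finset.mem_univ α)
  have hgt : U i a < U i (Function.update a i β) := by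
    rw [hbest]; exact lt_of_lt_of_le hα hle
  set b := Function.update a i β with hb
  have hbi : b i = β := Function.update_self i β a
  have hne : a i ≠ b i := by
    intro h
    rw [hbi] at h
    have hba : b = a := by rw [hb, ← h, Function.update_eq_self]
    rw [hba] at hgt
    exact lt_irrefl _ hgt
  have hnb : Neighbor a b i := ⟨hne, fun j hj => (Function.update_of_ne hj β a).symm⟩
  have hUab : U i a < U i b := by rw [hb]; exact hgt
  refine ⟨b, ⟨i, hnb⟩, ?_, ?_, ?_⟩
  · have := hpot i a β (a i)
    rw [Function.update_eq_self] at this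
    have : U i b - U i a = φ b - φ a := this
    linarith
  · rw [VLLL, Finset.sum_eq_single_of_mem i (Finset.mem_univ i)]
    · rw [if_pos hne, hb, hbest]; ring
    · intro j _ hj
      rw [if_neg]
      simp only [ne_eq, not_not]
      exact (hnb.2 j hj)
  · rw [VML, Finset.sum_eq_single_of_mem i (Finset.mem_univ i)]
    · rw [if_pos hne, max_eq_right (by linarith)]
    · intro j _ hj
      rw [if_neg]
      simp only [ne_eq, not_not]
      exact (hnb.2 j hj)

private lemma exists_zero_path
    (U : Fin n → (∀ i, A i) → ℝ) (φ : (∀ i, A i) → ℝ) (hpot : IsPotential U φ)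
    (a : ∀ j, A j) :
    ∃ p ω, IsPath ω p ∧ ω 0 = a ∧ IsNash U (ω p) ∧
      ∀ k < p, VLLL U (ω k) (ω (k + 1)) = 0 ∧ VML U (ω k) (ω (k + 1)) = 0 := by
  classical
  suffices h : ∀ (N : ℕ) (a : ∀ j, A j),
      (Finset.univ.filter fun x => φ a < φ x).card ≤ N →
      ∃ p ω, IsPath ω p ∧ ω 0 = a ∧ IsNash U (ω p) ∧
        (∀ k < p, φ (ω k) < φ (ω (k + 1))) ∧
        ∀ k < p, VLLL U (ω k) (ω (k + 1)) = 0 ∧ VML U (ω k) (ω (k + 1)) = 0 by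
    obtain ⟨p, ω, h1, h2, h3, _, h5⟩ := h _ a le_rfl
    exact ⟨p, ω, h1, h2, h3, h5⟩
  intro N
  induction N with
  | zero =>
    intro a hcard
    by_cases hN : IsNash U a
    · refine ⟨0, fun _ => a, ⟨?_, ?_⟩, rfl, hN, ?_, ?_⟩ <;>
        first
        | (intro k hk l hl _; omega)
        | (intro k hk; omega)
    · obtain ⟨b, _, hφ, _, _⟩ := step_lemma U φ hpot a hN
      have : b ∈ Finset.univ.filter fun x => φ a < φ x := by
        simp [hφ]
      have := Finset.card_pos.mpr ⟨b, this⟩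
      omega
  | succ N ih =>
    intro a hcard
    by_cases hN : IsNash U a
    · refine ⟨0, fun _ => a, ⟨?_, ?_⟩, rfl, hN, ?_, ?_⟩ <;>
        first
        | (intro k hk l hl _; omega)
        | (intro k hk; omega)
    · obtain ⟨b, ⟨i, hnb⟩, hφ, hL, hM⟩ := step_lemma U φ hpot a hN
      have hss : (Finset.univ.filter fun x => φ b < φ x) ⊂
          (Finset.univ.filter fun x => φ a < φ x) := by
        constructor
        · intro x hx
          simp only [Finset.mem_filter, Finset.mem_univ, true_and] at hx ⊢
          exact lt_trans hφ hx
        · intro hsub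
          have hb : b ∈ Finset.univ.filter fun x => φ a < φ x := by simp [hφ]
          have := hsub hb
          simp only [Finset.mem_filter, Finset.mem_univ, true_and] at this
          exact lt_irrefl _ this
      have hcard' : (Finset.univ.filter fun x => φ b < φ x).card ≤ N := by
        have := Finset.card_lt_card hss
        omega
      obtain ⟨p, ω, ⟨hinj, hnbr⟩, hω0, hNash, hmono, hcost⟩ := ih b hcard'
      refine ⟨p + 1, fun k => Nat.casesOn k a (fun m => ω m), ?_, rfl, ?_, ?_, ?_⟩
      · have hmono' : ∀ k < p + 1,
            φ (Nat.casesOn k a (fun m => ω m) : ∀ j, A j)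
              < φ (Nat.casesOn (k + 1) a (fun m => ω m) : ∀ j, A j) := by
          intro k hk
          cases k with
          | zero => simpa [hω0] using hφ
          | succ m => exact hmono m (by omega)
        constructor
        · intro k hk l hl heq
          have heq' : (Nat.casesOn k a (fun m => ω m) : ∀ j, A j)
              = Nat.casesOn l a (fun m => ω m) := heq
          rcases lt_trichotomy k l with h | h | h
          · have hc := chain_lt hmono' k l h hl
            rw [heq'] at hc
            exact absurd hc (lt_irrefl _)
          · exact h
          · have hc := chain_lt hmono' l k h hk
            rw [heq'] at hc
            exact absurd hc (lt_irrefl _)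
        · intro k hk
          cases k with
          | zero => exact ⟨i, by simpa [hω0] using hnb⟩
          | succ m => exact hnbr m (by omega)
      · exact hNash
      · intro k hk
        cases k with
        | zero => simpa [hω0] using hφ
        | succ m => exact hmono m (by omega)
      · intro k hk
        cases k with
        | zero => exact ⟨by simpa [hω0] using hL, by simpa [hω0] using hM⟩
        | succ m => exact hcost m (by omega)

/-- In a tie-free potential game, from every non-Nash profile `a` there is a
zero-cost LLL path and a zero-cost ML path to the set `M` of Nash equilibria. -/
theorem statement11
    (U : Fin n → (∀ i, A i) → ℝ) (φ : (∀ i, A i) → ℝ) (hpot : IsPotential U φ)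
    (htf : TieFree U) (a : ∀ j, A j) (ha : ¬ IsNash U a) :
    (ZPaths (VLLL U) a {x | IsNash U x}).Nonempty
    ∧ (ZPaths (VML U) a {x | IsNash U x}).Nonempty := by
  obtain ⟨p, ω, h1, h2, h3, h4⟩ := exists_zero_path U φ hpot a
  exact ⟨⟨(p, ω), h1, h2, h3, fun k hk => (h4 k hk).1⟩,
    ⟨(p, ω), h1, h2, h3, fun k hk => (h4 k hk).2⟩⟩

end Defs
end

section
/- Suppose the finite potential game is tie-free, and let M be the set of Nash equilibria. For a ∉ M let σ^ML(a) (resp. σ^LLL(a)) denote the minimal length of a zero-cost ML (resp. LLL) path from a to M. Then σ^ML(a) ≤ σ^LLL(a) for every a ∉ M, and consequently max_{a∉M} σ^ML(a) ≤ max_{a∉M} σ^LLL(a). -/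
open Finset Real Filter Topology

variable {n : ℕ} {A : Fin n → Type*}

section Defs
variable [∀ i, Fintype (A i)] [∀ i, DecidableEq (A i)] [∀ i, Nonempty (A i)]

lemma neighbor_eq_update {a b : ∀ i, A i} {i : Fin n} (h : Neighbor a b i) :
    b = Function.update a i (b i) := by
  funext j
  by_cases hj : j = i
  · subst hj; simp
  · rw [Function.update_of_ne hj, h.2 j hj]

lemma bestVal_ge_self (U : Fin n → (∀ i, A i) → ℝ) (i : Fin n) (a : ∀ j, A j) :
    U i a ≤ bestVal U i a := by
  have := bestVal_ge U i a (a i)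
  rwa [Function.update_eq_self] at this

lemma vlll_neighbor (U : Fin n → (∀ i, A i) → ℝ) {a b : ∀ i, A i} {i : Fin n}
    (h : Neighbor a b i) : VLLL U a b = bestVal U i a - U i b := by
  unfold VLLL
  rw [Finset.sum_eq_single i]
  · simp [h.1]
  · intro j _ hj
    simp [h.2 j hj]
  · intro hi; exact absurd (Finset.mem_univ i) hi

lemma vml_neighbor (U : Fin n → (∀ i, A i) → ℝ) {a b : ∀ i, A i} {i : Fin n}
    (h : Neighbor a b i) : VML U a b = max (U i a - U i b) 0 := by
  unfold VML
  rw [Finset.sum_eq_single i]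
  · simp [h.1]
  · intro j _ hj
    simp [h.2 j hj]
  · intro hi; exact absurd (Finset.mem_univ i) hi

/-- A zero-cost LLL path is a zero-cost ML path. -/
lemma zpaths_subset (U : Fin n → (∀ i, A i) → ℝ) (a : ∀ i, A i) (B : Set (∀ i, A i)) :
    ZPaths (VLLL U) a B ⊆ ZPaths (VML U) a B := by
  rintro ⟨p, ω⟩ ⟨hpath, h0, hB, hcost⟩
  refine ⟨hpath, h0, hB, fun k hk => ?_⟩
  obtain ⟨i, hnb⟩ := hpath.2 k hk
  have hL := hcost k hk
  rw [vlll_neighbor U hnb] at hL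
  have hb : U i (ω (k + 1)) = bestVal U i (ω k) := by linarith
  have hle : U i (ω k) ≤ U i (ω (k + 1)) := by
    rw [hb]; exact bestVal_ge_self U i (ω k)
  rw [vml_neighbor U hnb]
  simp only [max_eq_right (by linarith : U i (ω k) - U i (ω (k + 1)) ≤ 0)]

lemma strict_chain {f : ℕ → ℝ} {p : ℕ} (h : ∀ k < p, f k < f (k + 1)) :
    ∀ {k l : ℕ}, k < l → l ≤ p → f k < f l := by
  intro k l
  induction l with
  | zero => omega
  | succ m ih =>
    intro hkl hlp
    rcases Nat.lt_or_ge k m with hm | hm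
    · exact lt_trans (ih hm (by omega)) (h m (by omega))
    · have : k = m := by omega
      subst this
      exact h k (by omega)

/-- From any profile there is a zero-cost LLL path to a Nash equilibrium. -/
lemma exists_lll_path (U : Fin n → (∀ i, A i) → ℝ) (φ : (∀ i, A i) → ℝ)
    (hpot : IsPotential U φ) (a : ∀ i, A i) :
    ∃ q, q ∈ ZPaths (VLLL U) a {x | IsNash U x} := by
  classical
  suffices h : ∀ (m : ℕ) (a : ∀ i, A i),
      (Finset.univ.filter fun b => φ a < φ b).card ≤ m →
      ∃ (p : ℕ) (ω : ℕ → ∀ i, A i), ω 0 = a ∧ IsNash U (ω p) ∧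
        (∀ k < p, ∃ i, Neighbor (ω k) (ω (k + 1)) i) ∧
        (∀ k < p, VLLL U (ω k) (ω (k + 1)) = 0) ∧
        (∀ k < p, φ (ω k) < φ (ω (k + 1))) by
    obtain ⟨p, ω, h0, hN, hnb, hc, hmono⟩ :=
      h (Finset.univ.filter fun b => φ a < φ b).card a le_rfl
    refine ⟨(p, ω), ⟨⟨?_, hnb⟩, h0, hN, hc⟩⟩
    intro k hk l hl hkl
    by_contra hne
    rcases lt_trichotomy k l with h' | h' | h'
    · exact absurd (congrArg φ hkl) (ne_of_lt (strict_chain hmono h' hl))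
    · exact hne h'
    · exact absurd (congrArg φ hkl.symm) (ne_of_lt (strict_chain hmono h' hk))
  intro m
  induction m with
  | zero =>
    intro a hcard
    refine ⟨0, fun _ => a, rfl, ?_, by omega, by omega, by omega⟩
    intro i α
    by_contra hlt
    push_neg at hlt
    have hφ : φ a < φ (Function.update a i α) := by
      have := hpot i a α (a i)
      rw [Function.update_eq_self] at this
      linarith
    have : (Function.update a i α) ∈ Finset.univ.filter fun b => φ a < φ b := by
      simp [hφ]
    have := Finset.card_pos.2 ⟨_, this⟩
    omega
  | succ m ih =>
    intro a hcard
    by_cases hN : IsNash U a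
    · exact ⟨0, fun _ => a, rfl, hN, by omega, by omega, by omega⟩
    · -- one best-response step
      unfold IsNash at hN
      push_neg at hN
      obtain ⟨i, α, hα⟩ := hN
      obtain ⟨β, _, hβ⟩ := Finset.exists_mem_eq_sup' (Finset.univ_nonempty)
        (fun β : A i => U i (Function.update a i β))
      have hbv : U i (Function.update a i β) = bestVal U i a := hβ.symm
      set a' := Function.update a i β with ha'
      have hUlt : U i a < U i a' := lt_of_lt_of_le hα (hbv ▸ bestVal_ge U i a α)
      have hne : a i ≠ a' i := by
        intro h
        have : a' = a := by
          rw [ha', Function.update_eq_self_iff]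
          simp only [ha', Function.update_self] at h
          exact h.symm
        rw [this] at hUlt; exact lt_irrefl _ hUlt
      have hnb : Neighbor a a' i :=
        ⟨hne, fun j hj => (Function.update_of_ne hj _ _).symm⟩
      have hφlt : φ a < φ a' := by
        have := hpot i a β (a i)
        rw [Function.update_eq_self] at this
        rw [← ha'] at this
        linarith
      have hcard' : (Finset.univ.filter fun b => φ a' < φ b).card ≤ m := by
        have hss : (Finset.univ.filter fun b => φ a' < φ b) ⊂
            (Finset.univ.filter fun b => φ a < φ b) := by
          constructor
          · intro b hb
            simp only [Finset.mem_filter, Finset.mem_univ, true_and] at hb ⊢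
            linarith
          · intro hsub
            have : a' ∈ Finset.univ.filter fun b => φ a' < φ b :=
              hsub (by simp [hφlt])
            simp at this
        have := Finset.card_lt_card hss
        omega
      obtain ⟨p, ω, h0, hNash, hnbs, hcost, hmono⟩ := ih a' hcard'
      refine ⟨p + 1, fun k => if k = 0 then a else ω (k - 1), by simp, ?_, ?_, ?_, ?_⟩
      · simpa using hNash
      · intro k hk
        rcases Nat.eq_zero_or_pos k with rfl | hkpos
        · simpa [h0] using ⟨i, hnb⟩
        · obtain ⟨j, rfl⟩ := Nat.exists_eq_add_of_lt hkpos
          simpa using hnbs j (by omega)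
      · intro k hk
        rcases Nat.eq_zero_or_pos k with rfl | hkpos
        · have : VLLL U a (ω 0) = 0 := by
            rw [h0, vlll_neighbor U hnb]; linarith
          simpa using this
        · obtain ⟨j, rfl⟩ := Nat.exists_eq_add_of_lt hkpos
          simpa using hcost j (by omega)
      · intro k hk
        rcases Nat.eq_zero_or_pos k with rfl | hkpos
        · simpa [h0] using hφlt
        · obtain ⟨j, rfl⟩ := Nat.exists_eq_add_of_lt hkpos
          simpa using hmono j (by omega)

/-- In a tie-free potential game, `σ^ML(a) ≤ σ^LLL(a)` for every non-Nash `a`,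
and consequently `max_{a∉M} σ^ML(a) ≤ max_{a∉M} σ^LLL(a)`. -/
theorem statement12
    (U : Fin n → (∀ i, A i) → ℝ) (φ : (∀ i, A i) → ℝ) (hpot : IsPotential U φ)
    (htf : TieFree U) :
    (∀ a : ∀ j, A j, ¬ IsNash U a →
      minLen (VML U) a {x | IsNash U x} ≤ minLen (VLLL U) a {x | IsNash U x})
    ∧ sSup ((fun a => minLen (VML U) a {x | IsNash U x}) '' {a | ¬ IsNash U a})
        ≤ sSup ((fun a => minLen (VLLL U) a {x | IsNash U x}) '' {a | ¬ IsNash U a}) := by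
  classical
  have key : ∀ a : ∀ j, A j,
      minLen (VML U) a {x | IsNash U x} ≤ minLen (VLLL U) a {x | IsNash U x} := by
    intro a
    set SL := {p | ∃ ω, (p, ω) ∈ ZPaths (VLLL U) a {x | IsNash U x}} with hSL
    have hne : SL.Nonempty := by
      obtain ⟨⟨p, ω⟩, hq⟩ := exists_lll_path U φ hpot a
      exact ⟨p, ω, hq⟩
    have hmem : sInf SL ∈ SL := Nat.sInf_mem hne
    obtain ⟨ω, hω⟩ := hmem
    exact Nat.sInf_le ⟨ω, zpaths_subset U a _ hω⟩
  refine ⟨fun a _ => key a, ?_⟩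
  have hfin : ((fun a => minLen (VLLL U) a {x | IsNash U x}) '' {a | ¬ IsNash U a}).Finite :=
    Set.Finite.image _ (Set.toFinite _)
  rcases Set.eq_empty_or_nonempty
      ((fun a => minLen (VML U) a {x | IsNash U x}) '' {a | ¬ IsNash U a}) with he | hne
  · simp [he]
  · apply csSup_le hne
    rintro x ⟨a, ha, rfl⟩
    exact le_trans (key a) (le_csSup hfin.bddAbove ⟨a, ha, rfl⟩)

end Defs
end

section
/- Let T > 0 and let ω = (ω_0, …, ω_p) be a path of pairwise-distinct profiles with consecutive entries neighbors that has zero cost under LLL. Then the probability of traversing ω under log-linear learning is at least the probability of traversing it under Metropolis learning: ∏_{k=0}^{p−1} P_T^LLL(ω_k, ω_{k+1}) ≥ ∏_{k=0}^{p−1} P_T^ML(ω_k, ω_{k+1}). -/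
open Finset Real Filter Topology

variable {n : ℕ} {A : Fin n → Type*}

/-! Along a zero-cost LLL path every step moves the deviating player `i` to a best response, so
the log-linear step probability, `1/n` times a softmax weight of a maximiser, is at least
`1/(n |A_i|)`, while a Metropolis step never exceeds `1/(n |A_i|)`. The products then compare
factor by factor. -/

theorem inv_card_le_exp_div_sum_exp {ι : Type*} [Fintype ι] [Nonempty ι] (f : ι → ℝ) {m : ℝ}
    (hf : ∀ β, f β ≤ m) : (Fintype.card ι : ℝ)⁻¹ ≤ Real.exp m / ∑ β, Real.exp (f β) := by
  have hsum : ∑ β, Real.exp (f β) ≤ Fintype.card ι * Real.exp m := by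
    simpa using Finset.sum_le_card_nsmul univ _ _ fun β _ => Real.exp_le_exp.2 (hf β)
  rw [le_div_iff₀ (Finset.sum_pos (fun β _ => Real.exp_pos _) univ_nonempty),
    inv_mul_le_iff₀ (by exact_mod_cast Fintype.card_pos)]
  exact hsum

theorem Neighbor.ne {a b : ∀ i, A i} {i : Fin n} (h : Neighbor a b i) : a ≠ b :=
  fun hab => h.1 (congrFun hab i)

section
variable [∀ i, DecidableEq (A i)]

theorem Neighbor.sum_ite_neighbor {a b : ∀ i, A i} {i : Fin n} (h : Neighbor a b i)
    (f : Fin n → ℝ) : (∑ j, if Neighbor a b j then f j else 0) = f i :=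
  (Fintype.sum_eq_single i fun j hj => if_neg fun hj' => hj'.1 (h.2 j hj)).trans (if_pos h)

theorem Neighbor.sum_ite_ne {a b : ∀ i, A i} {i : Fin n} (h : Neighbor a b i)
    (f : Fin n → ℝ) : (∑ j, if a j ≠ b j then f j else 0) = f i :=
  (Fintype.sum_eq_single i fun j hj => if_neg (not_not.2 (h.2 j hj))).trans (if_pos h.1)

end

theorem le_bestVal [∀ i, Fintype (A i)] [∀ i, Nonempty (A i)] (U : Fin n → (∀ i, A i) → ℝ)
    (i : Fin n) (a : ∀ j, A j) (β : A i) :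
    U i (Function.update a i β) ≤ bestVal U i a :=
  Finset.le_sup' (fun β : A i => U i (Function.update a i β)) (mem_univ β)

section Defs
variable [∀ i, Fintype (A i)] [∀ i, DecidableEq (A i)] [∀ i, Nonempty (A i)]

theorem PMLoff_nonneg (U : Fin n → (∀ i, A i) → ℝ) (T : ℝ) (a b : ∀ i, A i) :
    0 ≤ PMLoff U T a b :=
  Finset.sum_nonneg fun i _ => by split_ifs <;> positivity

theorem PMLoff_le_of_neighbor {a b : ∀ i, A i} {i : Fin n} (h : Neighbor a b i)
    (U : Fin n → (∀ i, A i) → ℝ) {T : ℝ} (hT : 0 ≤ T) :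
    PMLoff U T a b ≤ 1 / ((n : ℝ) * Fintype.card (A i)) := by
  have hexp : Real.exp (-(max (U i a - U i b) 0) / T) ≤ 1 :=
    Real.exp_le_one_iff.2 (div_nonpos_of_nonpos_of_nonneg (by simp) hT)
  rw [PMLoff, h.sum_ite_neighbor]
  exact mul_le_of_le_one_right (by positivity) hexp

theorem le_PLLLoff_of_neighbor {a b : ∀ i, A i} {i : Fin n} (h : Neighbor a b i)
    (U : Fin n → (∀ i, A i) → ℝ) {T : ℝ} (hT : 0 ≤ T) (hbest : bestVal U i a ≤ U i b) :
    1 / ((n : ℝ) * Fintype.card (A i)) ≤ PLLLoff U T a b := by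
  have hsoftmax := inv_card_le_exp_div_sum_exp (fun β : A i => U i (Function.update a i β) / T)
    fun β => div_le_div_of_nonneg_right ((le_bestVal U i a β).trans hbest) hT
  rw [one_div, mul_inv, PLLLoff, h.sum_ite_neighbor, mul_div_assoc, one_div]
  gcongr

theorem PMLoff_le_PLLLoff_of_VLLL_eq_zero {a b : ∀ i, A i} {i : Fin n} (h : Neighbor a b i)
    (U : Fin n → (∀ i, A i) → ℝ) {T : ℝ} (hT : 0 ≤ T) (hzero : VLLL U a b = 0) :
    PMLoff U T a b ≤ PLLLoff U T a b := by
  have hbest : bestVal U i a ≤ U i b := by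
    rw [VLLL, h.sum_ite_ne] at hzero
    linarith
  exact (PMLoff_le_of_neighbor h U hT).trans (le_PLLLoff_of_neighbor h U hT hbest)

theorem statement13_general
    (U : Fin n → (∀ i, A i) → ℝ)
    (T : ℝ) (hT : 0 < T) (p : ℕ) (ω : ℕ → ∀ j, A j) (hpath : IsPath ω p)
    (hzero : ∀ k < p, VLLL U (ω k) (ω (k + 1)) = 0) :
    ∏ k ∈ Finset.range p, PML U T (ω k) (ω (k + 1))
      ≤ ∏ k ∈ Finset.range p, PLLL U T (ω k) (ω (k + 1)) := by
  refine Finset.prod_le_prod (fun k hk => ?_) (fun k hk => ?_) <;>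
    obtain ⟨i, hi⟩ := hpath.2 k (Finset.mem_range.1 hk)
  · rw [PML, if_neg hi.ne]
    exact PMLoff_nonneg U T _ _
  · rw [PML, PLLL, if_neg hi.ne, if_neg hi.ne]
    exact PMLoff_le_PLLLoff_of_VLLL_eq_zero hi U hT.le (hzero k (Finset.mem_range.1 hk))

/-- For every `T > 0` and every zero-cost LLL path, the probability of
traversing it under log-linear learning is at least its probability under
Metropolis learning. -/
theorem statement13 (hn : 0 < n)
    (U : Fin n → (∀ i, A i) → ℝ) (φ : (∀ i, A i) → ℝ) (hpot : IsPotential U φ)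
    (T : ℝ) (hT : 0 < T) (p : ℕ) (ω : ℕ → ∀ j, A j) (hpath : IsPath ω p)
    (hzero : ∀ k < p, VLLL U (ω k) (ω (k + 1)) = 0) :
    ∏ k ∈ Finset.range p, PML U T (ω k) (ω (k + 1))
      ≤ ∏ k ∈ Finset.range p, PLLL U T (ω k) (ω (k + 1)) :=
  statement13_general U T hT p ω hpath hzero

end Defs
end

section
/- Let D ⊆ 𝒜 with |D| ≥ 2 be such that every pair of distinct profiles in D is joined by a path all of whose entries lie in D. Then min over distinct pairs x, y ∈ D of A_c^ML(x, y) equals min_{z∈D} φ(z). Consequently, the ML mixing height of D, defined as H_m^ML(D) := max_{z∈D} φ(z) − min_{x≠y∈D} A_c^ML(x, y), equals max_{z∈D} φ(z) − min_{z∈D} φ(z). -/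
open Finset Real Filter Topology

variable {n : ℕ} {A : Fin n → Type*}

section Defs
variable [∀ i, Fintype (A i)] [∀ i, DecidableEq (A i)] [∀ i, Nonempty (A i)]

lemma VML_nonneg (U : Fin n → (∀ i, A i) → ℝ) (a b : ∀ i, A i) : 0 ≤ VML U a b := by
  apply Finset.sum_nonneg
  intro i _
  split
  · exact le_max_right _ _
  · exact le_refl 0

lemma VML_neighbor {U : Fin n → (∀ i, A i) → ℝ} {a b : ∀ i, A i} {i : Fin n}
    (h : Neighbor a b i) : VML U a b = max (U i a - U i b) 0 := by
  unfold VML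
  rw [Finset.sum_eq_single i]
  · simp [h.1]
  · intro j _ hj
    simp [h.2 j hj]
  · simp

lemma phi_sub_VML {U : Fin n → (∀ i, A i) → ℝ} {φ : (∀ i, A i) → ℝ} (hpot : IsPotential U φ)
    {a b : ∀ i, A i} {i : Fin n} (h : Neighbor a b i) :
    φ a - VML U a b = min (φ a) (φ b) := by
  have hb : Function.update a i (b i) = b := by
    funext j
    by_cases hj : j = i
    · subst hj; simp
    · simp [Function.update_of_ne hj, h.2 j hj]
  have hU : U i a - U i b = φ a - φ b := by
    have := hpot i a (a i) (b i)
    rwa [Function.update_eq_self, hb] at this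
  rw [VML_neighbor h, hU]
  rcases le_total (φ b) (φ a) with hle | hle
  · rw [max_eq_left (by linarith), min_eq_right hle]; ring
  · rw [max_eq_right (by linarith), min_eq_left hle]; ring

/-- If `D` (with `|D| ≥ 2`) is connected by paths lying in `D`, then the minimum
over distinct pairs in `D` of the ML communication altitude equals `min_{z∈D} φ(z)`; hence the
ML mixing height of `D` equals `max_{z∈D} φ(z) − min_{z∈D} φ(z)`. -/
theorem statement18
    (U : Fin n → (∀ i, A i) → ℝ) (φ : (∀ i, A i) → ℝ) (hpot : IsPotential U φ)
    (D : Finset (∀ j, A j)) (hcard : 1 < D.card) (hne : D.Nonempty)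
    (hoff : D.offDiag.Nonempty)
    (hconn : ∀ x ∈ D, ∀ y ∈ D, x ≠ y → ∃ (p : ℕ) (ω : ℕ → ∀ j, A j),
      0 < p ∧ IsPath ω p ∧ ω 0 = x ∧ ω p = y ∧ ∀ k ≤ p, ω k ∈ D) :
    D.offDiag.inf' hoff (fun q => Ac (VML U) φ q.1 q.2) = D.inf' hne φ
    ∧ D.sup' hne φ - D.offDiag.inf' hoff (fun q => Ac (VML U) φ q.1 q.2)
        = D.sup' hne φ - D.inf' hne φ := by
  have hub : ∀ x y : ∀ j, A j, ∀ v ∈ {v | ∃ (p : ℕ) (ω : ℕ → ∀ i, A i), 0 < p ∧ IsPath ω p ∧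
      ω 0 = x ∧ ω p = y ∧ v = ⨅ k : Fin p, (φ (ω k) - VML U (ω k) (ω (k + 1)))}, v ≤ φ x := by
    rintro x y v ⟨p, ω, hp, hpath, h0, hpv, rfl⟩
    have h1 : (⨅ k : Fin p, (φ (ω k) - VML U (ω k) (ω (k + 1))))
        ≤ φ (ω ((⟨0, hp⟩ : Fin p) : ℕ)) - VML U (ω ((⟨0, hp⟩ : Fin p) : ℕ))
            (ω (((⟨0, hp⟩ : Fin p) : ℕ) + 1)) :=
      ciInf_le (Set.Finite.bddBelow (Set.finite_range _)) (⟨0, hp⟩ : Fin p)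
    have h2 : 0 ≤ VML U (ω 0) (ω 1) := VML_nonneg U (ω 0) (ω 1)
    calc (⨅ k : Fin p, (φ (ω k) - VML U (ω k) (ω (k + 1))))
        ≤ φ (ω 0) - VML U (ω 0) (ω 1) := h1
      _ ≤ φ (ω 0) := by linarith
      _ = φ x := by rw [h0]
  have key : D.offDiag.inf' hoff (fun q => Ac (VML U) φ q.1 q.2) = D.inf' hne φ := by
    apply le_antisymm
    · obtain ⟨z, hz, hzmin⟩ := D.exists_mem_eq_inf' hne φ
      obtain ⟨y, hy, hyz⟩ := Finset.exists_mem_ne hcard z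
      have hzy : (z, y) ∈ D.offDiag := Finset.mem_offDiag.mpr ⟨hz, hy, hyz.symm⟩
      refine le_trans (Finset.inf'_le _ hzy) ?_
      rw [hzmin]
      obtain ⟨p, ω, hp, hpath, h0, hpy, _⟩ := hconn z hz y hy hyz.symm
      have hS : {v | ∃ (p : ℕ) (ω : ℕ → ∀ i, A i), 0 < p ∧ IsPath ω p ∧
          ω 0 = z ∧ ω p = y ∧
          v = ⨅ k : Fin p, (φ (ω k) - VML U (ω k) (ω (k + 1)))}.Nonempty :=
        ⟨_, p, ω, hp, hpath, h0, hpy, rfl⟩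
      exact csSup_le hS (hub z y)
    · apply Finset.le_inf'
      rintro ⟨x, y⟩ hxy
      rw [Finset.mem_offDiag] at hxy
      obtain ⟨hx, hy, hxy'⟩ := hxy
      obtain ⟨p, ω, hp, hpath, h0, hpy, hD⟩ := hconn x hx y hy hxy'
      have hvmem : (⨅ k : Fin p, (φ (ω k) - VML U (ω k) (ω (k + 1)))) ∈
          {v | ∃ (p : ℕ) (ω : ℕ → ∀ i, A i), 0 < p ∧ IsPath ω p ∧ ω 0 = x ∧ ω p = y ∧
            v = ⨅ k : Fin p, (φ (ω k) - VML U (ω k) (ω (k + 1)))} :=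
        ⟨p, ω, hp, hpath, h0, hpy, rfl⟩
      have hbdd : BddAbove {v | ∃ (p : ℕ) (ω : ℕ → ∀ i, A i), 0 < p ∧ IsPath ω p ∧
          ω 0 = x ∧ ω p = y ∧
          v = ⨅ k : Fin p, (φ (ω k) - VML U (ω k) (ω (k + 1)))} := ⟨φ x, hub x y⟩
      have hge : D.inf' hne φ ≤ ⨅ k : Fin p, (φ (ω k) - VML U (ω k) (ω (k + 1))) := by
        haveI : Nonempty (Fin p) := ⟨⟨0, hp⟩⟩
        apply le_ciInf
        intro k
        have hk : (k : ℕ) < p := k.2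
        obtain ⟨i, hnb⟩ := hpath.2 k hk
        rw [phi_sub_VML hpot hnb]
        exact le_min (Finset.inf'_le _ (hD k (le_of_lt hk)))
          (Finset.inf'_le _ (hD (k + 1) hk))
      exact hge.trans (le_csSup hbdd hvmem)
  exact ⟨key, by rw [key]⟩

end Defs
end
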